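/- For decisive preferences over sets of judgments, participation implies antipodal strategyproofness: if a rule F is susceptible to antipodal manipulation by some agent i in some profile P (with decisive set preferences derived from Hamming-distance preferences), then F is susceptible to no-show manipulation by agent i in some profile. -/

import Mathlib

/-! Let `Z = F(P₋ᵢ)`, `A = F(P₋ᵢ, J̄ᵢ)` and `B = F(P)`. Complementing the judgment reverses every
Hamming comparison, so a no-show by the antipodal voter `J̄ᵢ` from `(P₋ᵢ, J̄ᵢ)` is profitable when
`Z` beats `A` for the reversed preference. If neither `Z ≻ B` nor that reversed `Z ≻ A` held, a
nonempty `Z` would force both witnesses of the manipulation `A ≻ B` into `A ∩ B`, which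
decisiveness forbids. -/

/-- Decisive strict set preference for an agent with truthful judgment `Ji`:
`X ≻̊ Y` iff there exist `J ∈ X`, `J' ∈ Y` with `H(Ji, J) < H(Ji, J')` and
not both `J, J'` in `X ∩ Y`. -/
def SetPref {m : ℕ} (Ji : Fin m → Bool) (X Y : Finset (Fin m → Bool)) : Prop :=
  ∃ J ∈ X, ∃ J' ∈ Y,
    hammingDist Ji J < hammingDist Ji J' ∧ ¬ (J ∈ X ∩ Y ∧ J' ∈ X ∩ Y)

section Hamming

variable {ι : Type*} [Fintype ι]

theorem hammingDist_not_add_hammingDist (a J : ι → Bool) :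
    hammingDist (fun t => !a t) J + hammingDist a J = Fintype.card ι := by
  have hfilter : (Finset.univ.filter fun t => (!a t) ≠ J t) =
      Finset.univ.filter fun t => ¬ a t ≠ J t := by
    ext t
    cases a t <;> cases J t <;> simp
  rw [hammingDist, hammingDist, hfilter, add_comm, Finset.card_filter_add_card_filter_not,
    Finset.card_univ]

theorem hammingDist_not_lt_hammingDist_not {a J K : ι → Bool} :
    hammingDist (fun t => !a t) J < hammingDist (fun t => !a t) K ↔
      hammingDist a K < hammingDist a J := by
  have hJ := hammingDist_not_add_hammingDist a J
  have hK := hammingDist_not_add_hammingDist a K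
  omega

end Hamming

namespace SetPref

variable {m : ℕ} {a : Fin m → Bool} {X Y : Finset (Fin m → Bool)}

theorem of_lt {J J' : Fin m → Bool} (hJ : J ∈ X) (hJ' : J' ∈ Y)
    (hlt : hammingDist a J < hammingDist a J') (hout : ¬ (J ∈ Y ∧ J' ∈ X)) : SetPref a X Y :=
  ⟨J, hJ, J', hJ', hlt, fun ⟨hJXY, hJ'XY⟩ =>
    hout ⟨(Finset.mem_inter.1 hJXY).2, (Finset.mem_inter.1 hJ'XY).1⟩⟩

theorem or_antipodal_of_nonempty {A B Z : Finset (Fin m → Bool)} (h : SetPref a A B)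
    (hZ : Z.Nonempty) : SetPref a Z B ∨ SetPref (fun t => !a t) Z A := by
  obtain ⟨J, hJA, J', hJ'B, hlt, hnot⟩ := h
  obtain ⟨K, hK⟩ := hZ
  by_contra! hno
  obtain ⟨hZB, hZA⟩ := hno
  have toB : ∀ L ∈ Z, ∀ L' ∈ B, hammingDist a L < hammingDist a L' → L ∈ B ∧ L' ∈ Z :=
    fun L hL L' hL' hd => by_contra fun hout => hZB (of_lt hL hL' hd hout)
  have toA : ∀ L ∈ Z, ∀ L' ∈ A, hammingDist a L' < hammingDist a L → L ∈ A ∧ L' ∈ Z :=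
    fun L hL L' hL' hd => by_contra fun hout =>
      hZA (of_lt hL hL' (hammingDist_not_lt_hammingDist_not.2 hd) hout)
  have hJZ : J ∈ Z := by
    rcases lt_or_ge (hammingDist a K) (hammingDist a J') with hKJ' | hJ'K
    · exact (toA J' (toB K hK J' hJ'B hKJ').2 J hJA hlt).2
    · exact (toA K hK J hJA (hlt.trans_le hJ'K)).2
  obtain ⟨hJB, hJ'Z⟩ := toB J hJZ J' hJ'B hlt
  exact hnot ⟨Finset.mem_inter.2 ⟨hJA, hJB⟩,
    Finset.mem_inter.2 ⟨(toA J' hJ'Z J hJA hlt).1, hJ'B⟩⟩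

end SetPref

/-- For decisive preferences, participation implies antipodal strategyproofness
(contrapositive form): if `F` is susceptible to antipodal manipulation by agent `i`
in profile `P`, then `F` is susceptible to no-show manipulation by some agent in
some profile. -/
theorem participation_implies_antipodal_sp (m : ℕ) (D : Finset (Fin m → Bool))
    (F : (n : ℕ) → (Fin n → Fin m → Bool) → Finset (Fin m → Bool))
    (hF : ∀ (n : ℕ) (P : Fin n → Fin m → Bool), (∀ k, P k ∈ D) →
      (F n P).Nonempty ∧ F n P ⊆ D)
    (n : ℕ) (P : Fin (n + 1) → Fin m → Bool) (i : Fin (n + 1))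
    (hP : ∀ k, P k ∈ D) (hanti : (fun t => !(P i t)) ∈ D)
    (hmanip : SetPref (P i)
      (F (n + 1) (Function.update P i (fun t => !(P i t)))) (F (n + 1) P)) :
    ∃ (n' : ℕ) (P' : Fin (n' + 1) → Fin m → Bool) (i' : Fin (n' + 1)),
      (∀ k, P' k ∈ D) ∧
      SetPref (P' i') (F n' (fun k => P' (i'.succAbove k))) (F (n' + 1) P') := by
  rcases hmanip.or_antipodal_of_nonempty (hF n _ fun k => hP _).1 with hnoshow | hnoshow_anti
  · exact ⟨n, P, i, hP, hnoshow⟩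
  · refine ⟨n, Function.update P i fun t => !P i t, i,
      (Function.forall_update_iff P fun _ J => J ∈ D).2 ⟨hanti, fun k _ => hP k⟩, ?_⟩
    rwa [Function.update_self, show (fun k => Function.update P i (fun t => !P i t) (i.succAbove k))
      = fun k => P (i.succAbove k) from Fin.removeNth_update i _ P]
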